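/- Let n ≥ 1 and let g be the Minkowski bilinear form on ℝ^(n+1). Let x be timelike with x 0 > 0, and let y be a nonzero causal vector (g(y,y) ≤ 0). Then g(x,y) < 0 if and only if y 0 > 0, and g(x,y) > 0 if and only if y 0 < 0. -/
import Mathlib


/-- The Minkowski bilinear form on `ℝ^(n+1)`:
`g x y = -x 0 * y 0 + ∑_{i=1}^{n} x i * y i`. -/
noncomputable def minkowskiForm (n : ℕ) (x y : Fin (n + 1) → ℝ) : ℝ :=
  -(x 0 * y 0) + ∑ i : Fin n, x i.succ * y i.succ

/-- If `x` is timelike with `x 0 > 0` and `y` is a nonzero causal vector, then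
`g x y < 0 ↔ y 0 > 0` and `g x y > 0 ↔ y 0 < 0`. -/
theorem sign_of_minkowski_product_with_causal (n : ℕ) (hn : 1 ≤ n)
    (x y : Fin (n + 1) → ℝ)
    (hx : minkowskiForm n x x < 0) (hx0 : 0 < x 0)
    (hy : y ≠ 0) (hyc : minkowskiForm n y y ≤ 0) :
    (minkowskiForm n x y < 0 ↔ 0 < y 0) ∧
    (0 < minkowskiForm n x y ↔ y 0 < 0) := by
  unfold minkowskiForm at *
  set S := ∑ i : Fin n, x i.succ * y i.succ with hS
  have hA : (∑ i : Fin n, x i.succ * x i.succ) = ∑ i : Fin n, (x i.succ) ^ 2 := by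
    simp [sq]
  have hB : (∑ i : Fin n, y i.succ * y i.succ) = ∑ i : Fin n, (y i.succ) ^ 2 := by
    simp [sq]
  rw [hA] at hx
  rw [hB] at hyc
  have hAnn : 0 ≤ ∑ i : Fin n, (x i.succ) ^ 2 :=
    Finset.sum_nonneg fun i _ => sq_nonneg _
  have hBnn : 0 ≤ ∑ i : Fin n, (y i.succ) ^ 2 :=
    Finset.sum_nonneg fun i _ => sq_nonneg _
  have hy0 : y 0 ≠ 0 := by
    intro h0
    have hB0 : (∑ i : Fin n, (y i.succ) ^ 2) = 0 := by
      have : ∑ i : Fin n, (y i.succ) ^ 2 ≤ 0 := by rw [h0] at hyc; linarith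
      linarith
    have hzero : ∀ i : Fin n, (y i.succ) ^ 2 = 0 := by
      intro i
      exact (Finset.sum_eq_zero_iff_of_nonneg (fun i _ => sq_nonneg _)).mp hB0 i
        (Finset.mem_univ i)
    apply hy
    funext i
    refine Fin.cases ?_ ?_ i
    · exact h0
    · intro j
      have := hzero j
      have := pow_eq_zero_iff (n := 2) (by norm_num) |>.mp this
      simpa using this
  have hcs : S ^ 2 ≤ (∑ i : Fin n, (x i.succ) ^ 2) * (∑ i : Fin n, (y i.succ) ^ 2) := by
    rw [hS]
    exact Finset.sum_mul_sq_le_sq_mul_sq Finset.univ _ _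
  have hkey : S ^ 2 < (x 0 * y 0) ^ 2 := by
    have hy0sq : 0 < (y 0) ^ 2 := by positivity
    have h1 : (∑ i : Fin n, (x i.succ) ^ 2) * (∑ i : Fin n, (y i.succ) ^ 2)
        ≤ (∑ i : Fin n, (x i.succ) ^ 2) * (y 0) ^ 2 := by
      apply mul_le_mul_of_nonneg_left _ hAnn
      nlinarith
    have h2 : (∑ i : Fin n, (x i.succ) ^ 2) * (y 0) ^ 2 < (x 0) ^ 2 * (y 0) ^ 2 := by
      apply mul_lt_mul_of_pos_right _ hy0sq
      nlinarith
    calc S ^ 2 ≤ _ := hcs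
      _ ≤ _ := h1
      _ < (x 0) ^ 2 * (y 0) ^ 2 := h2
      _ = (x 0 * y 0) ^ 2 := by ring
  have habs : |S| < |x 0 * y 0| := by
    exact abs_lt_of_sq_lt_sq
      (show S ^ 2 < (|x 0 * y 0|) ^ 2 by rw [sq_abs]; exact hkey) (abs_nonneg _)
  have hlow : -(|x 0 * y 0|) < S := (abs_lt.mp habs).1
  have hhigh : S < |x 0 * y 0| := (abs_lt.mp habs).2
  constructor
  · constructor
    · intro hlt
      rcases lt_trichotomy (y 0) 0 with h | h | h
      · exfalso
        have h1 : x 0 * y 0 < 0 := mul_neg_of_pos_of_neg hx0 h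
        rw [abs_of_neg h1] at hlow
        linarith
      · exact absurd h hy0
      · exact h
    · intro hpos
      have h1 : 0 < x 0 * y 0 := mul_pos hx0 hpos
      rw [abs_of_pos h1] at hhigh
      linarith
  · constructor
    · intro hlt
      rcases lt_trichotomy (y 0) 0 with h | h | h
      · exact h
      · exact absurd h hy0
      · exfalso
        have h1 : 0 < x 0 * y 0 := mul_pos hx0 h
        rw [abs_of_pos h1] at hhigh
        linarith
    · intro hneg
      have h1 : x 0 * y 0 < 0 := mul_neg_of_pos_of_neg hx0 hneg
      rw [abs_of_neg h1] at hlow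
      linarith
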